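/- Let R be a commutative noetherian ring, let 𝔞 and 𝔟 be ideals of R, and let 𝒮 be a class of R-modules satisfying the C_𝔞 and C_𝔟 conditions. Then 𝒮 satisfies the C_{𝔞+𝔟} condition. -/

import Mathlib

/-!
With `K = (0 :_M 𝔟)`, the module `K` is `𝔞`-torsion and `(0 :_K 𝔞) ≅ (0 :_M (𝔞 + 𝔟))` lies in `𝒮`,
so `K ∈ 𝒮` by `C_𝔞`. Since `M` is `𝔟`-torsion, `C_𝔟` then gives `M ∈ 𝒮`.
-/

universe u

open Submodule

variable {R : Type u} [CommRing R]

/-- `Γ_a(M)`, the `a`-torsion submodule of `M`: the set of elements annihilated by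
some power of the ideal `a`. -/
def torsionGamma (a : Ideal R) (M : Type u) [AddCommGroup M] [Module R M] :
    Submodule R M :=
  ⨆ n : ℕ, Submodule.torsionBySet R M ((a ^ n : Ideal R) : Set R)

/-- The class `S` satisfies the condition `C_a` on the module `M`:
if `Γ_a(M) = M` and `(0 :_M a) ∈ S` then `M ∈ S`. -/
def CCondOn (S : ModuleCat.{u} R → Prop) (a : Ideal R) (M : ModuleCat.{u} R) : Prop :=
  torsionGamma a M = ⊤ →
    S (ModuleCat.of R (Submodule.torsionBySet R M (a : Set R))) → S M

/-- The class `S` satisfies the condition `C_a` (on every `R`-module). -/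
def CCond (S : ModuleCat.{u} R → Prop) (a : Ideal R) : Prop :=
  ∀ M : ModuleCat.{u} R, CCondOn S a M

/-- The class `S` is closed under isomorphisms of `R`-modules. -/
def IsoClosed (S : ModuleCat.{u} R → Prop) : Prop :=
  ∀ ⦃M N : ModuleCat.{u} R⦄, (M ≃ₗ[R] N) → S M → S N

/-- `S` is a Serre subcategory of the category of `R`-modules: it is closed under
isomorphisms, contains the zero module, and is closed under submodules, quotient modules
and extensions. -/
structure IsSerreClass (S : ModuleCat.{u} R → Prop) : Prop where
  iso : IsoClosed S
  zero : ∀ M : ModuleCat.{u} R, Subsingleton M → S M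
  subobj : ∀ (M : ModuleCat.{u} R) (N : Submodule R M), S M → S (ModuleCat.of R N)
  quot : ∀ (M : ModuleCat.{u} R) (N : Submodule R M), S M → S (ModuleCat.of R (M ⧸ N))
  extension : ∀ (M : ModuleCat.{u} R) (N : Submodule R M),
    S (ModuleCat.of R N) → S (ModuleCat.of R (M ⧸ N)) → S M

section torsionBySet

variable {M : Type*} [AddCommGroup M] [Module R M]

lemma torsionBySet_submodule_eq_comap (N : Submodule R M) (s : Set R) :
    torsionBySet R N s = comap N.subtype (torsionBySet R M s) := by
  ext x
  simp [Subtype.ext_iff]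

lemma torsionBySet_ideal_sup (a b : Ideal R) :
    torsionBySet R M ↑(a ⊔ b) = torsionBySet R M a ⊓ torsionBySet R M b := by
  refine le_antisymm
    (le_inf (torsionBySet_le_torsionBySet_of_subset (SetLike.coe_subset_coe.mpr le_sup_left))
      (torsionBySet_le_torsionBySet_of_subset (SetLike.coe_subset_coe.mpr le_sup_right)))
    fun x hx => ?_
  obtain ⟨hxa, hxb⟩ := mem_inf.mp hx
  rw [mem_torsionBySet_iff] at hxa hxb ⊢
  rintro ⟨r, hr⟩
  obtain ⟨ra, hra, rb, hrb, rfl⟩ := Submodule.mem_sup.mp hr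
  simp [add_smul, hxa ⟨ra, hra⟩, hxb ⟨rb, hrb⟩]

def torsionBySetTorsionBySetEquiv (a b : Ideal R) :
    torsionBySet R (torsionBySet R M b) a ≃ₗ[R] torsionBySet R M ↑(a ⊔ b) :=
  LinearEquiv.ofEq _ _ (by
      rw [torsionBySet_submodule_eq_comap, torsionBySet_ideal_sup, comap_inf,
        comap_subtype_self, inf_top_eq]) ≪≫ₗ
    comapSubtypeEquivOfLe (torsionBySet_le_torsionBySet_of_subset
      (SetLike.coe_subset_coe.mpr le_sup_right))

end torsionBySet

section torsionGamma

variable {M : Type u} [AddCommGroup M] [Module R M]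

lemma mem_torsionGamma_iff {c : Ideal R} {x : M} :
    x ∈ torsionGamma c M ↔ ∃ n : ℕ, x ∈ torsionBySet R M ↑(c ^ n) :=
  mem_iSup_of_directed _
    (Monotone.directed_le fun i j h => torsionBySet_le_torsionBySet_pow i j h c)

lemma torsionGamma_le_torsionGamma_of_le {c d : Ideal R} (h : c ≤ d) :
    torsionGamma d M ≤ torsionGamma c M :=
  iSup_mono fun n => torsionBySet_le_torsionBySet_of_subset (Ideal.pow_right_mono h n)

lemma torsionGamma_eq_top_of_le {c d : Ideal R} (h : c ≤ d) (hd : torsionGamma d M = ⊤) :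
    torsionGamma c M = ⊤ :=
  top_unique (hd ▸ torsionGamma_le_torsionGamma_of_le h)

lemma torsionGamma_submodule_eq_top {c : Ideal R} (N : Submodule R M)
    (h : torsionGamma c M = ⊤) : torsionGamma c N = ⊤ := by
  refine eq_top_iff.mpr fun x _ => ?_
  obtain ⟨n, hn⟩ := mem_torsionGamma_iff.mp (h ▸ mem_top : (x : M) ∈ torsionGamma c M)
  exact mem_torsionGamma_iff.mpr ⟨n, by rwa [torsionBySet_submodule_eq_comap]⟩

end torsionGamma

theorem stmt3_general (a b : Ideal R)
    (S : ModuleCat.{u} R → Prop)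
    (hiso : IsoClosed S)
    (hCa : CCond S a) (hCb : CCond S b) :
    CCond S (a + b) := by
  intro M hM hS
  have hK : S (ModuleCat.of R (torsionBySet R M (b : Set R))) :=
    hCa _ (torsionGamma_submodule_eq_top _ (torsionGamma_eq_top_of_le le_sup_left hM))
      (hiso (torsionBySetTorsionBySetEquiv a b).symm hS)
  exact hCb M (torsionGamma_eq_top_of_le le_sup_right hM) hK

/-- If a class `S` satisfies the `C_a` and `C_b` conditions,
then it satisfies the `C_{a+b}` condition. -/
theorem stmt3 [IsNoetherianRing R] (a b : Ideal R)
    (S : ModuleCat.{u} R → Prop)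
    (hiso : IsoClosed S)
    (hCa : CCond S a) (hCb : CCond S b) :
    CCond S (a + b) :=
  stmt3_general a b S hiso hCa hCb
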